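/- Let m ≥ 2, n ≥ 1, let A be a real m×m symmetric matrix with a_{ij} ≥ 0 for i ≠ j, zero row sums, and irreducible; let ε > 0 and c > 0, and let λ₁ < 0 be the largest eigenvalue of the pinned matrix Ã (entry ã_{11} = a_{11} − ε, ã_{ij} = a_{ij} otherwise). Suppose f : ℝⁿ × [0,∞) → ℝⁿ satisfies condition (11) with positive diagonal matrices P = diag(p₁,…,p_n), Δ = diag(Δ₁,…,Δ_n) and constant η > 0, and that Δ_k + cλ₁ < 0 for every k = 1,…,n. Let s : [0,∞) → ℝⁿ satisfy s'(t) = f(s(t),t), and let x₁,…,x_m : [0,∞) → ℝⁿ satisfy the controlled network equations x₁'(t) = f(x₁(t),t) + c·Σ_{j=1}^m a_{1j} x_j(t) − cε(x₁(t) − s(t)) and x_i'(t) = f(x_i(t),t) + c·Σ_{j=1}^m a_{ij} x_j(t) for i = 2,…,m. Then for all t ≥ 0, Σ_{i=1}^m (x_i(t) − s(t))ᵀ P (x_i(t) − s(t)) ≤ e^{−(2η/max_k p_k)·t} · Σ_{i=1}^m (x_i(0) − s(0))ᵀ P (x_i(0) − s(0)); in particular every x_i converges to s exponentially. -/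

import Mathlib

/-!
With the errors `eᵢ = xᵢ - s`, the zero row sums of `A` turn the controlled network into
`eᵢ' = f(xᵢ) - f(s) + c ∑ⱼ Ãᵢⱼ eⱼ`. For the Lyapunov function `V = ∑ᵢ eᵢᵀ P eᵢ`, condition (11)
bounds the nonlinear part of `V'/2` by `-η ∑ᵢ |eᵢ|² + ∑ᵢ eᵢᵀ P Δ eᵢ`, while, coordinate by
coordinate, the coupling part is a quadratic form of the symmetric matrix `Ã` and is at most
`c λ₁ V`. Since `Δₖ + c λ₁ < 0`, this leaves `V' ≤ -2η ∑ᵢ |eᵢ|² ≤ -(2η / max p) V`, and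
Grönwall's inequality gives the exponential decay.
-/

open Matrix

theorem Matrix.IsHermitian.dotProduct_mulVec_le {ι : Type*} [Fintype ι]
    {M : Matrix ι ι ℝ} (hM : M.IsHermitian) {lam : ℝ}
    (hlam : ∀ μ, Module.End.HasEigenvalue M.mulVecLin μ → μ ≤ lam) (v : ι → ℝ) :
    v ⬝ᵥ M *ᵥ v ≤ lam * (v ⬝ᵥ v) := by
  classical
  -- `λ - M` is positive semidefinite: its spectrum is `λ - σ(M) ⊆ [0, ∞)`.
  have hB : (algebraMap ℝ _ lam - M).IsHermitian :=
    (isHermitian_diagonal fun _ => lam).sub hM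
  have hpsd : (algebraMap ℝ _ lam - M).PosSemidef := by
    refine hB.posSemidef_iff_eigenvalues_nonneg.2 fun i => ?_
    obtain ⟨_, rfl, μ, hμ, hi⟩ :=
      spectrum.singleton_sub_eq M lam ▸ hB.eigenvalues_mem_spectrum_real i
    rw [← spectrum_toLin', ← Module.End.hasEigenvalue_iff_mem_spectrum, toLin'_apply'] at hμ
    simp only [Pi.zero_apply, ← hi, sub_nonneg]
    exact hlam μ hμ
  have := hpsd.dotProduct_mulVec_nonneg v
  rwa [star_trivial, sub_mulVec, dotProduct_sub, Algebra.algebraMap_eq_smul_one, smul_mulVec,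
    one_mulVec, dotProduct_smul, smul_eq_mul, sub_nonneg] at this

theorem le_exp_mul_of_hasDerivAt_le_mul {V V' : ℝ → ℝ} {K t : ℝ}
    (hV : ∀ u, 0 ≤ u → HasDerivAt V (V' u) u) (hle : ∀ u, 0 ≤ u → V' u ≤ K * V u)
    (ht : 0 ≤ t) : V t ≤ Real.exp (K * t) * V 0 := by
  have := le_gronwallBound_of_liminf_deriv_right_le (ε := 0)
    (fun u hu => (hV u hu.1).continuousAt.continuousWithinAt)
    (fun u hu _ hr => (hV u hu.1).hasDerivWithinAt.liminf_right_slope_le hr) le_rfl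
    (fun u hu => by simpa using hle u hu.1) t ⟨ht, le_rfl⟩
  rwa [gronwallBound_ε0, sub_zero, mul_comm] at this

section Weighted

variable {κ : Type*} [Fintype κ] {p : κ → ℝ}

theorem dotProduct_weighted_self_le {pmax : ℝ} (hp : ∀ k, p k ≤ pmax) (v : κ → ℝ) :
    (v ⬝ᵥ fun k => p k * v k) ≤ pmax * (v ⬝ᵥ v) := by
  simp only [dotProduct, Finset.mul_sum]
  exact Finset.sum_le_sum fun k _ => by nlinarith [mul_self_nonneg (v k), hp k]

theorem dotProduct_weighted_sub_le_of_shifted {Δ : κ → ℝ} {d η : ℝ} (hp : ∀ k, 0 ≤ p k)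
    (hΔ : ∀ k, Δ k ≤ d) {x y u v : κ → ℝ}
    (h : (x - y) ⬝ᵥ (fun k => p k * (u k - Δ k * x k - v k + Δ k * y k))
      ≤ -η * ((x - y) ⬝ᵥ (x - y))) :
    ((x - y) ⬝ᵥ fun k => p k * (u - v) k)
      ≤ -η * ((x - y) ⬝ᵥ (x - y)) + d * ((x - y) ⬝ᵥ fun k => p k * (x - y) k) := by
  have hsplit : ((x - y) ⬝ᵥ fun k => p k * (u - v) k)
      = (x - y) ⬝ᵥ (fun k => p k * (u k - Δ k * x k - v k + Δ k * y k))
        + ∑ k, Δ k * (p k * (x - y) k ^ 2) := by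
    simp only [dotProduct, Pi.sub_apply, ← Finset.sum_add_distrib]
    exact Finset.sum_congr rfl fun k _ => by ring
  have hΔsum : ∑ k, Δ k * (p k * (x - y) k ^ 2) ≤ d * ((x - y) ⬝ᵥ fun k => p k * (x - y) k) := by
    simp only [dotProduct, Finset.mul_sum]
    refine Finset.sum_le_sum fun k _ => ?_
    rw [show (x - y) k * (p k * (x - y) k) = p k * (x - y) k ^ 2 by ring]
    exact mul_le_mul_of_nonneg_right (hΔ k) (mul_nonneg (hp k) (sq_nonneg _))
  linarith

theorem HasDerivAt.dotProduct_weighted_self {u : ℝ → κ → ℝ} {u' : κ → ℝ} {t : ℝ}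
    (hu : HasDerivAt u u' t) (p : κ → ℝ) :
    HasDerivAt (fun t => u t ⬝ᵥ fun k => p k * u t k) (2 * (u t ⬝ᵥ fun k => p k * u' k)) t := by
  have hk := fun k => hasDerivAt_pi.1 hu k
  refine (HasDerivAt.fun_sum (u := Finset.univ) fun k _ =>
    (hk k).fun_mul ((hk k).const_mul (p k))).congr_deriv ?_
  simp only [dotProduct, Finset.mul_sum]
  exact Finset.sum_congr rfl fun k _ => by ring

end Weighted

section Coupling

variable {ι κ : Type*} [Fintype ι] [Fintype κ] {p : κ → ℝ} {M : Matrix ι ι ℝ} {lam : ℝ}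

theorem sum_dotProduct_weighted_sum_smul_le (hM : M.IsHermitian)
    (hlam : ∀ μ, Module.End.HasEigenvalue M.mulVecLin μ → μ ≤ lam) (hp : ∀ k, 0 ≤ p k)
    (e : ι → κ → ℝ) :
    ∑ i, (e i ⬝ᵥ fun k => p k * (∑ j, M i j • e j) k)
      ≤ lam * ∑ i, e i ⬝ᵥ fun k => p k * e i k := by
  calc ∑ i, (e i ⬝ᵥ fun k => p k * (∑ j, M i j • e j) k)
      = ∑ k, p k * ((fun i => e i k) ⬝ᵥ M *ᵥ fun i => e i k) := by
        simp only [dotProduct, mulVec, Finset.sum_apply, Pi.smul_apply, smul_eq_mul,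
          Finset.mul_sum]
        rw [Finset.sum_comm]
        exact Finset.sum_congr rfl fun k _ => Finset.sum_congr rfl fun i _ =>
          Finset.sum_congr rfl fun j _ => by ring
    _ ≤ ∑ k, p k * (lam * ((fun i => e i k) ⬝ᵥ fun i => e i k)) :=
        Finset.sum_le_sum fun k _ =>
          mul_le_mul_of_nonneg_left (hM.dotProduct_mulVec_le hlam _) (hp k)
    _ = lam * ∑ i, e i ⬝ᵥ fun k => p k * e i k := by
        simp only [dotProduct, Finset.mul_sum]
        rw [Finset.sum_comm]
        exact Finset.sum_congr rfl fun k _ => Finset.sum_congr rfl fun i _ => by ring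

theorem sum_dotProduct_weighted_le_of_coupling (hM : M.IsHermitian)
    (hlam : ∀ μ, Module.End.HasEigenvalue M.mulVecLin μ → μ ≤ lam) {pmax η c : ℝ}
    (hp : ∀ k, 0 ≤ p k) (hpmax : ∀ k, p k ≤ pmax) (hpmax_pos : 0 < pmax) (hη : 0 ≤ η)
    (hc : 0 ≤ c) (e a : ι → κ → ℝ)
    (ha : ∀ i, (e i ⬝ᵥ fun k => p k * a i k)
      ≤ -η * (e i ⬝ᵥ e i) + -(c * lam) * (e i ⬝ᵥ fun k => p k * e i k)) :
    ∑ i, (e i ⬝ᵥ fun k => p k * (a i + c • ∑ j, M i j • e j) k)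
      ≤ -(η / pmax) * ∑ i, e i ⬝ᵥ fun k => p k * e i k := by
  set V := ∑ i, e i ⬝ᵥ fun k => p k * e i k
  have hsplit : ∑ i, (e i ⬝ᵥ fun k => p k * (a i + c • ∑ j, M i j • e j) k)
      = ∑ i, (e i ⬝ᵥ fun k => p k * a i k)
        + c * ∑ i, (e i ⬝ᵥ fun k => p k * (∑ j, M i j • e j) k) := by
    simp only [dotProduct, Pi.add_apply, Pi.smul_apply, smul_eq_mul, Finset.mul_sum,
      ← Finset.sum_add_distrib]
    exact Finset.sum_congr rfl fun i _ => Finset.sum_congr rfl fun k _ => by ring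
  have hnonlin :
      ∑ i, (e i ⬝ᵥ fun k => p k * a i k) ≤ -η * ∑ i, e i ⬝ᵥ e i + -(c * lam) * V := by
    have := Finset.sum_le_sum (s := Finset.univ) fun i _ => ha i
    rwa [Finset.sum_add_distrib, ← Finset.mul_sum, ← Finset.mul_sum] at this
  have hcoupling :=
    mul_le_mul_of_nonneg_left (sum_dotProduct_weighted_sum_smul_le hM hlam hp e) hc
  have hV : V ≤ pmax * ∑ i, e i ⬝ᵥ e i := by
    simpa only [Finset.mul_sum] using
      Finset.sum_le_sum fun i _ => dotProduct_weighted_self_le hpmax (e i)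
  have hscaled : η / pmax * V ≤ η * ∑ i, e i ⬝ᵥ e i := by
    rw [div_mul_eq_mul_div, div_le_iff₀ hpmax_pos]
    nlinarith
  linarith

end Coupling

theorem sum_smul_sub_of_sum_eq_zero {ι E : Type*} [Fintype ι] [AddCommGroup E] [Module ℝ E]
    {a : ι → ℝ} (ha : ∑ j, a j = 0) (x : ι → E) (y : E) :
    ∑ j, a j • (x j - y) = ∑ j, a j • x j := by
  simp only [smul_sub, Finset.sum_sub_distrib, ← Finset.sum_smul, ha, zero_smul, sub_zero]

theorem Matrix.IsSymm.isHermitian_of_pinned {ι : Type*} [DecidableEq ι] {A B : Matrix ι ι ℝ}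
    {i0 : ι} {ε : ℝ} (hA : A.IsSymm)
    (hB : ∀ i j, B i j = if i = i0 ∧ j = i0 then A i j - ε else A i j) : B.IsHermitian := by
  ext i j
  rw [conjTranspose_apply, star_trivial, hB, hB, hA.apply i j]
  simp only [and_comm]

section Pinning

variable {ι E : Type*} [Fintype ι] [DecidableEq ι] {A B : Matrix ι ι ℝ} {i0 : ι} {ε : ℝ}

theorem sum_pinned_smul [AddCommGroup E] [Module ℝ E]
    (hB : ∀ i j, B i j = if i = i0 ∧ j = i0 then A i j - ε else A i j)
    (i : ι) (e : ι → E) :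
    ∑ j, B i j • e j = ∑ j, A i j • e j - if i = i0 then ε • e i0 else 0 := by
  have hterm : ∀ j, B i j • e j = A i j • e j - if i = i0 ∧ j = i0 then ε • e j else 0 := by
    intro j
    rw [hB]
    split_ifs <;> simp [sub_smul]
  simp only [hterm, Finset.sum_sub_distrib]
  by_cases hi : i = i0 <;> simp [hi]

theorem hasDerivAt_pinning_error [NormedAddCommGroup E] [NormedSpace ℝ E]
    (hrow : ∀ i, ∑ j, A i j = 0)
    (hB : ∀ i j, B i j = if i = i0 ∧ j = i0 then A i j - ε else A i j)
    {c t : ℝ} {F : E → ℝ → E} {s : ℝ → E} {x : ι → ℝ → E} (hs : HasDerivAt s (F (s t) t) t)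
    (hx0 : HasDerivAt (x i0)
      (F (x i0 t) t + c • (∑ j, A i0 j • x j t) - (c * ε) • (x i0 t - s t)) t)
    (hx : ∀ i, i ≠ i0 → HasDerivAt (x i) (F (x i t) t + c • ∑ j, A i j • x j t) t) (i : ι) :
    HasDerivAt (fun t => x i t - s t)
      (F (x i t) t - F (s t) t + c • ∑ j, B i j • (x j t - s t)) t := by
  rw [sum_pinned_smul hB, sum_smul_sub_of_sum_eq_zero (hrow i)]
  by_cases hi : i = i0
  · subst hi
    refine (hx0.sub hs).congr_deriv ?_
    rw [if_pos rfl]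
    module
  · refine ((hx i hi).sub hs).congr_deriv ?_
    rw [if_neg hi]
    module

end Pinning

/-- Theorem 2: global exponential pinning of a linearly coupled network with an
irreducible symmetric coupling matrix via a single controller. -/
theorem stmt_5 (m n : ℕ) (hm : 2 ≤ m)
    (A : Matrix (Fin m) (Fin m) ℝ) (hsym : A.IsSymm)
    (hrow : ∀ i : Fin m, ∑ j, A i j = 0)
    (ε c : ℝ) (hc : 0 < c)
    (Atil : Matrix (Fin m) (Fin m) ℝ)
    (hAtil : ∀ i j : Fin m, Atil i j =
      if i = (⟨0, by omega⟩ : Fin m) ∧ j = (⟨0, by omega⟩ : Fin m) then A i j - ε else A i j)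
    (lam1 : ℝ) (hlam1max : ∀ μ : ℝ, Module.End.HasEigenvalue (Matrix.mulVecLin Atil) μ → μ ≤ lam1)
    (p Δ : Fin n → ℝ) (hp : ∀ k, 0 < p k)
    (η : ℝ) (hη : 0 < η)
    (f : (Fin n → ℝ) → ℝ → (Fin n → ℝ))
    (hcond : ∀ t : ℝ, 0 ≤ t → ∀ x y : Fin n → ℝ,
      (x - y) ⬝ᵥ (fun k => p k * (f x t k - Δ k * x k - f y t k + Δ k * y k))
        ≤ -η * ((x - y) ⬝ᵥ (x - y)))
    (hΔc : ∀ k : Fin n, Δ k + c * lam1 < 0)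
    (s : ℝ → Fin n → ℝ) (hs : ∀ t : ℝ, 0 ≤ t → HasDerivAt s (f (s t) t) t)
    (x : Fin m → ℝ → Fin n → ℝ)
    (hx1 : ∀ t : ℝ, 0 ≤ t → HasDerivAt (x ⟨0, by omega⟩)
      (f (x ⟨0, by omega⟩ t) t + c • (∑ j, A ⟨0, by omega⟩ j • x j t)
        - (c * ε) • (x ⟨0, by omega⟩ t - s t)) t)
    (hxi : ∀ i : Fin m, i ≠ (⟨0, by omega⟩ : Fin m) → ∀ t : ℝ, 0 ≤ t →
      HasDerivAt (x i) (f (x i t) t + c • (∑ j, A i j • x j t)) t)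
    (pmax : ℝ) (hpmax : IsGreatest (Set.range p) pmax)
    (t : ℝ) (ht : 0 ≤ t) :
    ∑ i : Fin m, (x i t - s t) ⬝ᵥ (fun k => p k * (x i t - s t) k)
      ≤ Real.exp (-(2 * η / pmax) * t) *
        ∑ i : Fin m, (x i 0 - s 0) ⬝ᵥ (fun k => p k * (x i 0 - s 0) k) := by
  obtain ⟨k0, rfl⟩ := hpmax.1
  have hple : ∀ k, p k ≤ p k0 := fun k => hpmax.2 ⟨k, rfl⟩
  have herr := fun u hu => hasDerivAt_pinning_error hrow hAtil (hs u hu) (hx1 u hu)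
    fun i hi => hxi i hi u hu
  refine le_exp_mul_of_hasDerivAt_le_mul
    (fun u hu => HasDerivAt.fun_sum fun i _ => (herr u hu i).dotProduct_weighted_self p)
    (fun u hu => ?_) ht
  have hdecay := sum_dotProduct_weighted_le_of_coupling (hsym.isHermitian_of_pinned hAtil)
    hlam1max (fun k => (hp k).le) hple (hp k0) hη.le hc.le (fun i => x i u - s u)
    (fun i => f (x i u) u - f (s u) u) fun i =>
      dotProduct_weighted_sub_le_of_shifted (fun k => (hp k).le)
        (fun k => le_neg_iff_add_nonpos_right.2 (hΔc k).le) (hcond u hu _ _)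
  rw [← Finset.mul_sum, show -(2 * η / p k0) = 2 * -(η / p k0) by ring, mul_assoc]
  linarith
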